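/- Let S ⊂ ℙ²(ℂ) be the set of 12 triple points of the arrangement of nine lines given by the linear factors of (x³ − y³)(x³ − z³)(y³ − z³), i.e. the 12 points lying on three of the nine lines. Then the only homogeneous polynomial of degree 3 in ℂ[x,y,z] vanishing at every point of S is the zero polynomial. Consequently, since the space of homogeneous cubics has dimension 10, the evaluation map from the space of homogeneous cubics to ℂ¹² given by evaluating at (representatives of) the 12 points of S is injective with image of dimension 10, so the 12 points fail by exactly 2 to impose independent conditions on cubics (the superabundance s equals 2). -/

import Mathlib

open MvPolynomial

/-- The set of lines of the arrangement given by the nine linear factors of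
`(x³ − y³)(x³ − z³)(y³ − z³)` passing through the point with homogeneous coordinates `P`:
a line is encoded as a pair `(ω, k)` with `ω³ = 1`, where `k = 0, 1, 2` encodes the lines
`x = ωy`, `x = ωz`, `y = ωz` respectively. -/
def linesThrough (P : Fin 3 → ℂ) : Set (ℂ × Fin 3) :=
  {q | q.1 ^ 3 = 1 ∧
    ![P 0 = q.1 * P 1, P 0 = q.1 * P 2, P 1 = q.1 * P 2] q.2}

/-- The number of the nine lines passing through the point `P`. -/
noncomputable def numLines (P : Fin 3 → ℂ) : ℕ :=
  (linesThrough P).ncard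

/-- The evaluation map from the space of homogeneous cubics in `ℂ[x,y,z]` to `ℂ¹²`, given by
evaluating at representatives of the 12 points `e 0, …, e 11` of `ℙ²(ℂ)`. -/
noncomputable def evalMap (e : Fin 12 → Projectivization ℂ (Fin 3 → ℂ)) :
    (homogeneousSubmodule (Fin 3) ℂ 3) →ₗ[ℂ] (Fin 12 → ℂ) :=
  LinearMap.pi fun i =>
    (MvPolynomial.aeval ((e i).rep) :
        MvPolynomial (Fin 3) ℂ →ₐ[ℂ] ℂ).toLinearMap ∘ₗ
      (homogeneousSubmodule (Fin 3) ℂ 3).subtype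

/-!
The twelve triple points are the three coordinate points and the nine points `(1 : a : b)` with
`a³ = b³ = 1`. Vanishing at the coordinate points kills the coefficients of `x³, y³, z³`. On the
nine points `(1 : a : b)` the seven remaining monomials restrict to seven distinct characters
`(a, b) ↦ aⁱ bʲ`, `i, j < 3`, of `μ₃ × μ₃`; these are linearly independent (a Vandermonde argument
in each variable), so all coefficients vanish. The dimension count is `(3 + 3 - 1).choose 3 = 10`.
-/

namespace MvPolynomial

theorem finrank_homogeneousSubmodule {σ R : Type*} [Fintype σ] [CommRing R] [Nontrivial R]
    (n : ℕ) :
    Module.finrank R (homogeneousSubmodule σ R n) = (Fintype.card σ + n - 1).choose n := by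
  classical
  have hdeg :
      {d : σ →₀ ℕ | d.degree = n} = (Finset.univ.finsuppAntidiag n : Finset (σ →₀ ℕ)) := by
    ext d
    simp [Finsupp.degree_eq_sum]
  rw [homogeneousSubmodule_eq_finsupp_supported, hdeg,
    (AddMonoidAlgebra.supportedEquivFinsupp _).finrank_eq, Module.finrank_finsupp_self]
  simp [Finset.card_finsuppAntidiag_nat_eq_choose]

theorem IsHomogeneous.eval_smul {σ R : Type*} [Fintype σ] [CommSemiring R]
    {F : MvPolynomial σ R} {n : ℕ} (hF : F.IsHomogeneous n) (c : R) (x : σ → R) :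
    eval (c • x) F = c ^ n * eval x F := by
  rw [eval_eq', eval_eq', Finset.mul_sum]
  refine Finset.sum_congr rfl fun d hd => ?_
  have hdeg : ∑ i, d i = n := by
    rw [← Finsupp.degree_eq_sum, Finsupp.degree_eq_weight_one]
    exact hF (mem_support_iff.mp hd)
  simp_rw [Pi.smul_apply, smul_eq_mul, mul_pow, Finset.prod_mul_distrib,
    Finset.prod_pow_eq_pow_sum, hdeg]
  ring

end MvPolynomial

namespace IsPrimitiveRoot

variable {R : Type*} [CommRing R] [IsDomain R] {ζ : R} {n : ℕ}

theorem eq_zero_of_forall_sum_mul_pow_eq_zero (hζ : IsPrimitiveRoot ζ n) {c : Fin n → R}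
    (h : ∀ a : R, a ^ n = 1 → ∑ i, c i * a ^ (i : ℕ) = 0) : c = 0 :=
  Matrix.eq_zero_of_forall_index_sum_mul_pow_eq_zero (f := fun j : Fin n => ζ ^ (j : ℕ))
    (fun i j hij => Fin.ext (hζ.pow_inj i.2 j.2 hij))
    (fun j => h _ (by rw [← pow_mul, mul_comm, pow_mul, hζ.pow_eq_one, one_pow]))

theorem eq_zero_of_forall_sum_mul_pow_mul_pow_eq_zero (hζ : IsPrimitiveRoot ζ n)
    {c : Fin n → Fin n → R}
    (h : ∀ a b : R, a ^ n = 1 → b ^ n = 1 → ∑ i, ∑ j, c i j * a ^ (i : ℕ) * b ^ (j : ℕ) = 0) :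
    c = 0 := by
  have hrow : ∀ b : R, b ^ n = 1 → ∀ i, ∑ j, c i j * b ^ (j : ℕ) = 0 := fun b hb =>
    congrFun <| hζ.eq_zero_of_forall_sum_mul_pow_eq_zero fun a ha => by
      simpa [Finset.sum_mul, mul_right_comm _ _ (a ^ _), mul_assoc] using h a b ha hb
  funext i
  exact hζ.eq_zero_of_forall_sum_mul_pow_eq_zero fun b hb => hrow b hb i

end IsPrimitiveRoot

noncomputable def ternaryExp (i j k : ℕ) : Fin 3 →₀ ℕ := Finsupp.equivFunOnFinite.symm ![i, j, k]

@[simp] lemma ternaryExp_inj {i j k i' j' k' : ℕ} :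
    ternaryExp i j k = ternaryExp i' j' k' ↔ i = i' ∧ j = j' ∧ k = k' := by
  simp [ternaryExp, funext_iff, Fin.forall_fin_succ]

lemma eq_ternaryExp (d : Fin 3 →₀ ℕ) : d = ternaryExp (d 0) (d 1) (d 2) := by
  ext i; fin_cases i <;> rfl

lemma mem_ternaryExps_of_degree_eq_three {d : Fin 3 →₀ ℕ} (hd : d.degree = 3) :
    d ∈ ({ternaryExp 3 0 0, ternaryExp 0 3 0, ternaryExp 0 0 3, ternaryExp 2 1 0,
      ternaryExp 2 0 1, ternaryExp 1 2 0, ternaryExp 0 2 1, ternaryExp 1 0 2, ternaryExp 0 1 2,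
      ternaryExp 1 1 1} : Finset (Fin 3 →₀ ℕ)) := by
  rw [Finsupp.degree_eq_sum, Fin.sum_univ_three] at hd
  have h0 : d 0 ≤ 3 := by omega
  have h1 : d 1 ≤ 3 - d 0 := by omega
  rw [eq_ternaryExp d, show d 2 = 3 - d 0 - d 1 by omega]
  interval_cases d 0 <;> interval_cases d 1 <;> simp

lemma eval_of_isHomogeneous_three {R : Type*} [CommSemiring R] {F : MvPolynomial (Fin 3) R}
    (hF : F.IsHomogeneous 3) (x y z : R) :
    eval ![x, y, z] F =
      coeff (ternaryExp 3 0 0) F * x ^ 3 + coeff (ternaryExp 0 3 0) F * y ^ 3 +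
      coeff (ternaryExp 0 0 3) F * z ^ 3 + coeff (ternaryExp 2 1 0) F * x ^ 2 * y +
      coeff (ternaryExp 2 0 1) F * x ^ 2 * z + coeff (ternaryExp 1 2 0) F * x * y ^ 2 +
      coeff (ternaryExp 0 2 1) F * y ^ 2 * z + coeff (ternaryExp 1 0 2) F * x * z ^ 2 +
      coeff (ternaryExp 0 1 2) F * y * z ^ 2 + coeff (ternaryExp 1 1 1) F * x * y * z := by
  rw [eval_eq', Finset.sum_subset
    (fun d hd => mem_ternaryExps_of_degree_eq_three (hF.degree_eq_sum_deg_support hd).symm)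
    (fun d _ hd => by rw [notMem_support_iff.mp hd, zero_mul])]
  simp [Fin.prod_univ_three, ternaryExp, add_assoc, mul_assoc]

theorem eq_zero_of_eval_triplePoints_eq_zero {K : Type*} [CommRing K] [IsDomain K] {ω : K}
    (hω : IsPrimitiveRoot ω 3) {F : MvPolynomial (Fin 3) K} (hF : F.IsHomogeneous 3)
    (hx : eval ![1, 0, 0] F = 0) (hy : eval ![0, 1, 0] F = 0) (hz : eval ![0, 0, 1] F = 0)
    (h : ∀ a b : K, a ^ 3 = 1 → b ^ 3 = 1 → eval ![1, a, b] F = 0) : F = 0 := by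
  set c : ℕ → ℕ → ℕ → K := fun i j k => coeff (ternaryExp i j k) F
  -- Entry `(i, j)` is the coefficient of `aⁱ bʲ` in `F(1, a, b)`; as `a³ = b³ = 1`, the three
  -- pure cubes all contribute to the constant entry.
  have hC := hω.eq_zero_of_forall_sum_mul_pow_mul_pow_eq_zero
    (c := ![![c 3 0 0 + c 0 3 0 + c 0 0 3, c 2 0 1, c 1 0 2],
      ![c 2 1 0, c 1 1 1, c 0 1 2],
      ![c 1 2 0, c 0 2 1, 0]]) fun a b ha hb => by
    have hab := h a b ha hb
    rw [eval_of_isHomogeneous_three hF] at hab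
    simp only [Fin.sum_univ_three, Matrix.cons_val', Matrix.cons_val_fin_one, Matrix.cons_val_zero,
      Matrix.cons_val_one, Matrix.cons_val, Fin.coe_ofNat_eq_mod, Nat.zero_mod, Nat.one_mod,
      Nat.mod_succ]
    linear_combination hab - c 0 3 0 * ha - c 0 0 3 * hb
  have entry (i j : Fin 3) := congrFun (congrFun hC i) j
  have h300 : c 3 0 0 = 0 := by simpa [eval_of_isHomogeneous_three hF] using hx
  have h030 : c 0 3 0 = 0 := by simpa [eval_of_isHomogeneous_three hF] using hy
  have h003 : c 0 0 3 = 0 := by simpa [eval_of_isHomogeneous_three hF] using hz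
  ext d
  rw [coeff_zero]
  by_cases hd : d.degree = 3
  · have hd := mem_ternaryExps_of_degree_eq_three hd
    simp only [Finset.mem_insert, Finset.mem_singleton] at hd
    rcases hd with rfl | rfl | rfl | rfl | rfl | rfl | rfl | rfl | rfl | rfl
    exacts [h300, h030, h003, entry 1 0, entry 0 1, entry 2 0, entry 2 1, entry 0 2, entry 1 2,
      entry 1 1]
  · exact hF.coeff_eq_zero hd

theorem linesThrough_finite (P : Fin 3 → ℂ) : (linesThrough P).Finite :=
  ((Polynomial.nthRootsFinset 3 (1 : ℂ)).finite_toSet.prod Set.finite_univ).subset fun _ hq =>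
    ⟨(Polynomial.mem_nthRootsFinset (by norm_num) 1).mpr hq.1, Set.mem_univ _⟩

theorem linesThrough_smul {c : ℂ} (hc : c ≠ 0) (P : Fin 3 → ℂ) :
    linesThrough (c • P) = linesThrough P := by
  ext ⟨q, k⟩
  fin_cases k <;> simp [linesThrough, mul_left_comm q c, mul_right_inj' hc]

theorem two_le_numLines {P : Fin 3 → ℂ} {q r : ℂ × Fin 3} (hq : q ∈ linesThrough P)
    (hr : r ∈ linesThrough P) (hqr : q ≠ r) : 2 ≤ numLines P := by
  rw [numLines, ← Set.ncard_pair hqr]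
  exact Set.ncard_le_ncard (Set.pair_subset hq hr) (linesThrough_finite P)

theorem two_le_numLines_of_forall_mem {P : Fin 3 → ℂ} (k : Fin 3)
    (hP : ∀ q : ℂ, q ^ 3 = 1 → (q, k) ∈ linesThrough P) : 2 ≤ numLines P := by
  have hω := Complex.isPrimitiveRoot_exp 3 (by norm_num)
  exact two_le_numLines (hP 1 (one_pow 3)) (hP _ hω.pow_eq_one)
    (by simpa [eq_comm] using hω.ne_one (by norm_num))

theorem two_le_numLines_one {a b : ℂ} (ha : a ^ 3 = 1) (hb : b ^ 3 = 1) :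
    2 ≤ numLines ![1, a, b] :=
  two_le_numLines (q := (a ^ 2, 0)) (r := (b ^ 2, 1))
    ⟨by rw [← pow_mul, pow_mul', ha, one_pow], show 1 = a ^ 2 * a by rw [← pow_succ, ha]⟩
    ⟨by rw [← pow_mul, pow_mul', hb, one_pow], show 1 = b ^ 2 * b by rw [← pow_succ, hb]⟩
    (by simp)

theorem eval_eq_zero_of_evalMap_eq_zero {e : Fin 12 → Projectivization ℂ (Fin 3 → ℂ)}
    (he : ∀ p : Projectivization ℂ (Fin 3 → ℂ), 2 ≤ numLines p.rep → p ∈ Set.range e)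
    {G : homogeneousSubmodule (Fin 3) ℂ 3} (hG : evalMap e G = 0) {P : Fin 3 → ℂ} (hP : P ≠ 0)
    (hP2 : 2 ≤ numLines P) : eval P (G : MvPolynomial (Fin 3) ℂ) = 0 := by
  obtain ⟨u, hu⟩ := Projectivization.exists_smul_eq_mk_rep ℂ P hP
  obtain ⟨i, hi⟩ := he _ (by rwa [← hu, Units.smul_def, numLines, linesThrough_smul u.ne_zero])
  have hGi : eval (e i).rep (G : MvPolynomial (Fin 3) ℂ) = 0 := by
    simpa [evalMap, MvPolynomial.coe_aeval_eq_eval] using congrFun hG i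
  rw [hi, ← hu, Units.smul_def, G.2.eval_smul] at hGi
  exact (mul_eq_zero.mp hGi).resolve_left (pow_ne_zero 3 u.ne_zero)

/-- the only homogeneous cubic vanishing at all 12 triple points of the
arrangement of the nine linear factors of `(x³ − y³)(x³ − z³)(y³ − z³)` is the zero polynomial.
Consequently, since the space of homogeneous cubics has dimension 10, for any enumeration
`e : Fin 12` of the triple points the evaluation map to `ℂ¹²` is injective with image of
dimension 10, so the 12 points fail by exactly 2 to impose independent conditions on cubics
(the superabundance `s` equals `2`). -/
theorem stmt10 :
    (∀ F : MvPolynomial (Fin 3) ℂ, F.IsHomogeneous 3 →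
      (∀ P : Fin 3 → ℂ, P ≠ 0 → 2 ≤ numLines P → MvPolynomial.eval P F = 0) →
      F = 0) ∧
    Module.finrank ℂ (homogeneousSubmodule (Fin 3) ℂ 3) = 10 ∧
    ∀ e : Fin 12 → Projectivization ℂ (Fin 3 → ℂ),
      Function.Injective e →
      (∀ p : Projectivization ℂ (Fin 3 → ℂ),
        2 ≤ numLines p.rep ↔ p ∈ Set.range e) →
      Function.Injective (evalMap e) ∧
      Module.finrank ℂ (LinearMap.range (evalMap e)) = 10 ∧
      12 - Module.finrank ℂ (LinearMap.range (evalMap e)) = 2 := by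
  have hvanish : ∀ F : MvPolynomial (Fin 3) ℂ, F.IsHomogeneous 3 →
      (∀ P : Fin 3 → ℂ, P ≠ 0 → 2 ≤ numLines P → eval P F = 0) → F = 0 := fun F hF h =>
    eq_zero_of_eval_triplePoints_eq_zero (Complex.isPrimitiveRoot_exp 3 (by norm_num)) hF
      (h _ (by simp) (two_le_numLines_of_forall_mem 2 fun q hq => by simp [linesThrough, hq]))
      (h _ (by simp) (two_le_numLines_of_forall_mem 1 fun q hq => by simp [linesThrough, hq]))
      (h _ (by simp) (two_le_numLines_of_forall_mem 0 fun q hq => by simp [linesThrough, hq]))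
      fun a b ha hb => h _ (by simp) (two_le_numLines_one ha hb)
  have hdim : Module.finrank ℂ (homogeneousSubmodule (Fin 3) ℂ 3) = 10 := by
    rw [finrank_homogeneousSubmodule]
    rfl
  refine ⟨hvanish, hdim, fun e _ he => ?_⟩
  have hinj : Function.Injective (evalMap e) := by
    refine (injective_iff_map_eq_zero _).mpr fun G hG => Subtype.ext ?_
    exact hvanish G G.2 fun P hP hP2 =>
      eval_eq_zero_of_evalMap_eq_zero (fun p => (he p).mp) hG hP hP2
  rw [LinearMap.finrank_range_of_inj hinj, hdim]
  exact ⟨hinj, rfl, rfl⟩
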